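/- (Proposition 1, bottom-up bound.) Let P be a probability distribution on an instance space X, let the per-instance loss satisfy 0 ≤ ℓ(θ; x) ≤ 1 for every θ ∈ Θ and P-almost every x, and let D ∼ P^n be an i.i.d. dataset. Assume the population risk attains its infimum L_P* := inf_{θ ∈ Θ} L_P(θ) at some θ* ∈ Θ. Let θ̂_BU be a (possibly randomized) data-dependent heuristic satisfying θ̂_BU ∈ argmin_{θ ∈ Θ} L̂_D(θ). Then E[ L_P(θ̂_BU) ] − L_P* ≤ sqrt( I(θ̂_BU; D) / (2n) ). -/

import Mathlib

open MeasureTheory ProbabilityTheory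
open scoped ENNReal

open Classical in
/-- The Kullback–Leibler divergence between two measures, valued in `ℝ≥0∞`:
it is `∫ log (dμ/dν) dμ` when `μ ≪ ν` and the log-likelihood ratio is integrable,
and `∞` otherwise. -/
noncomputable def klDiv {α : Type*} [MeasurableSpace α] (μ ν : Measure α) : ℝ≥0∞ :=
  if μ ≪ ν ∧ Integrable (llr μ ν) μ then ENNReal.ofReal (∫ x, llr μ ν x ∂μ) else ⊤

/-- The mutual information `I(U; V)` between two random variables: the KL divergence
between their joint law and the product of their marginal laws. -/
noncomputable def mutualInfo {Ω α β : Type*} [MeasurableSpace Ω] [MeasurableSpace α]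
    [MeasurableSpace β] (μ : Measure Ω) (U : Ω → α) (V : Ω → β) : ℝ≥0∞ :=
  klDiv (μ.map fun ω => (U ω, V ω)) ((μ.map U).prod (μ.map V))

/-!
Since `θ̂` minimises the empirical risk, `L̂_D(θ̂) ≤ L̂_D(θ*)`, and `E[L̂_D(θ*)] = L_P(θ*)`; so the
excess risk is at most the expected generalization gap `L_P(θ̂) - L̂_D(θ̂)` under the joint law of
`(θ̂, D)`. For each fixed `θ` the gap is a centred mean of `n` independent `[0, 1]`-valued
variables, hence `1/(4n)`-sub-Gaussian by Hoeffding's lemma, and this persists under the product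
of the marginals of `θ̂` and `D`. The Donsker–Varadhan inequality moves from the product to the
joint law at the cost of the mutual information, `λ E[gap] ≤ I(θ̂; D) + λ² / (8n)` for every `λ`,
and optimising over `λ` gives `√(I(θ̂; D) / (2n))`.
-/

open Real Set
open scoped NNReal

section Divergence

variable {α : Type*} [MeasurableSpace α] {μ ν : Measure α}
  [IsProbabilityMeasure μ] [IsProbabilityMeasure ν]

lemma integral_llr_nonneg (hμν : μ ≪ ν) (h_int : Integrable (llr μ ν) μ) :
    0 ≤ ∫ x, llr μ ν x ∂μ := by
  simpa using InformationTheory.integral_llr_add_sub_measure_univ_nonneg hμν h_int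

/-- The Donsker–Varadhan inequality: Gibbs' inequality for `μ` against the tilted measure
`ν.tilted f`. -/
lemma integral_le_integral_llr_add_log_integral_exp (hμν : μ ≪ ν)
    (h_int : Integrable (llr μ ν) μ) {f : α → ℝ} (hfμ : Integrable f μ)
    (hfν : Integrable (fun x ↦ exp (f x)) ν) :
    ∫ x, f x ∂μ ≤ ∫ x, llr μ ν x ∂μ + log (∫ x, exp (f x) ∂ν) := by
  have : IsProbabilityMeasure (ν.tilted f) := isProbabilityMeasure_tilted hfν
  have h_gibbs := integral_llr_nonneg (hμν.trans (absolutelyContinuous_tilted hfν))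
    (integrable_llr_tilted_right hμν hfμ h_int hfν)
  rw [integral_llr_tilted_right hμν hfμ hfν h_int] at h_gibbs
  linarith

end Divergence

lemma le_sqrt_of_forall_mul_le_add_sq {a c I : ℝ} (hc : 0 ≤ c)
    (h : ∀ t, t * a ≤ I + c * t ^ 2 / 2) : a ≤ √(2 * c * I) := by
  rcases le_or_gt a 0 with ha | ha
  · exact ha.trans (sqrt_nonneg _)
  refine le_sqrt_of_sq_le ?_
  rcases hc.eq_or_lt with rfl | hc
  · have := h ((I + 1) / a)
    field_simp at this
    linarith
  · have := h (a / c)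
    field_simp at this
    nlinarith

section Subgaussian

variable {α Θ : Type*} [MeasurableSpace α] [MeasurableSpace Θ] {c : ℝ≥0}

lemma ProbabilityTheory.HasSubgaussianMGF.integral_le_sqrt_mul_integral_llr {μ ν : Measure α}
    [IsProbabilityMeasure μ] [IsProbabilityMeasure ν] {f : α → ℝ}
    (h : HasSubgaussianMGF f c ν) (hμν : μ ≪ ν) (h_int : Integrable (llr μ ν) μ) :
    ∫ x, f x ∂μ ≤ √(2 * c * ∫ x, llr μ ν x ∂μ) := by
  by_cases hf : Integrable f μ
  swap
  · rw [integral_undef hf]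
    positivity
  refine le_sqrt_of_forall_mul_le_add_sq c.coe_nonneg fun t ↦ ?_
  have h_dv := integral_le_integral_llr_add_log_integral_exp hμν h_int (hf.const_mul t)
    (h.integrable_exp_mul t)
  rw [integral_const_mul] at h_dv
  have h_cgf := h.cgf_le t
  rw [cgf, mgf] at h_cgf
  linarith

lemma hasSubgaussianMGF_prod_of_forall {ρ : Measure Θ} [IsProbabilityMeasure ρ]
    {ν : Measure α} [SFinite ν] {g : Θ × α → ℝ} (hg : Measurable g) (h : ∀ θ, HasSubgaussianMGF (fun x ↦ g (θ, x)) c ν) :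
    HasSubgaussianMGF g c (ρ.prod ν) := by
  have h_int t : Integrable (fun p ↦ exp (t * g p)) (ρ.prod ν) := by
    have hm : Measurable fun p ↦ exp (t * g p) := by fun_prop
    refine (integrable_prod_iff hm.aestronglyMeasurable).2
      ⟨ae_of_all _ fun θ ↦ (h θ).integrable_exp_mul t, ?_⟩
    refine .of_bound hm.norm.stronglyMeasurable.integral_prod_right'.aestronglyMeasurable
      (exp (c * t ^ 2 / 2)) (ae_of_all _ fun θ ↦ ?_)
    simp only [norm_of_nonneg (exp_pos _).le]
    rw [norm_of_nonneg (integral_nonneg fun _ ↦ (exp_pos _).le)]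
    exact (h θ).mgf_le t
  refine ⟨h_int, fun t ↦ ?_⟩
  calc mgf g (ρ.prod ν) t = ∫ θ, mgf (fun x ↦ g (θ, x)) ν t ∂ρ := integral_prod _ (h_int t)
    _ ≤ ∫ _, exp (c * t ^ 2 / 2) ∂ρ :=
      integral_mono (h_int t).integral_prod_left (integrable_const _) fun θ ↦ (h θ).mgf_le t
    _ = exp (c * t ^ 2 / 2) := by simp

lemma hasSubgaussianMGF_integral_sub_sampleMean {P : Measure α} [IsProbabilityMeasure P]
    {X : α → ℝ} {a b : ℝ} {n : ℕ} (hn : n ≠ 0) (hX : AEMeasurable X P)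
    (hb : ∀ᵐ x ∂P, X x ∈ Icc a b) :
    HasSubgaussianMGF (fun d : Fin n → α ↦ P[X] - (∑ i, X (d i)) / n)
      ((‖b - a‖₊ / 2) ^ 2 / n) (Measure.pi fun _ ↦ P) := by
  have hY := (hasSubgaussianMGF_of_mem_Icc hX hb).neg.const_mul (n : ℝ)⁻¹
  have hY_eval (i : Fin n) := HasSubgaussianMGF.of_map (Y := Function.eval i)
    (measurable_pi_apply i).aemeasurable (μ := Measure.pi fun _ ↦ P)
    (by rwa [(measurePreserving_eval (fun _ ↦ P) i).map_eq])
  have h_sum := HasSubgaussianMGF.sum_of_iIndepFun (iIndepFun_pi fun _ ↦ hY.aemeasurable)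
    (s := Finset.univ) fun i _ ↦ hY_eval i
  convert h_sum using 1
  · funext d
    simp only [Pi.neg_apply, ← Finset.mul_sum, Finset.sum_sub_distrib,
      Finset.sum_const, Finset.card_univ, Fintype.card_fin, nsmul_eq_mul, neg_sub]
    field_simp
  · ext
    simp only [NNReal.coe_div, NNReal.coe_pow, coe_nnnorm, NNReal.coe_ofNat, NNReal.coe_natCast,
      inv_pow, Finset.sum_const, Finset.card_univ, Fintype.card_fin, nsmul_eq_mul, NNReal.coe_mul]
    -- `const_mul` builds its constant with an anonymous constructor, which `simp` cannot unfold
    erw [NNReal.coe_mul, NNReal.coe_mk]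
    simp only [NNReal.coe_pow, NNReal.coe_div, coe_nnnorm, NNReal.coe_ofNat]
    field_simp

end Subgaussian

section Risk

variable {𝒳 Θ : Type*} {ℓ : Θ → 𝒳 → ℝ} {n : ℕ} {a b : ℝ}

noncomputable def empiricalRisk (ℓ : Θ → 𝒳 → ℝ) (d : Fin n → 𝒳) (θ : Θ) : ℝ :=
  (∑ i, ℓ θ (d i)) / n

lemma empiricalRisk_mem_Icc (hn : n ≠ 0) {θ : Θ} {d : Fin n → 𝒳}
    (h : ∀ i, ℓ θ (d i) ∈ Icc a b) : empiricalRisk ℓ d θ ∈ Icc a b := by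
  have hn : (0 : ℝ) < n := by positivity
  rw [empiricalRisk, mem_Icc, le_div_iff₀ hn, div_le_iff₀ hn]
  constructor
  · simpa [mul_comm] using Finset.card_nsmul_le_sum _ _ _ fun i (_ : i ∈ Finset.univ) ↦ (h i).1
  · simpa [mul_comm] using Finset.sum_le_card_nsmul _ _ _ fun i (_ : i ∈ Finset.univ) ↦ (h i).2

variable [MeasurableSpace 𝒳] {P : Measure 𝒳}

noncomputable def populationRisk (P : Measure 𝒳) (ℓ : Θ → 𝒳 → ℝ) (θ : Θ) : ℝ :=
  ∫ x, ℓ θ x ∂P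

noncomputable def generalizationGap (P : Measure 𝒳) (ℓ : Θ → 𝒳 → ℝ)
    (p : Θ × (Fin n → 𝒳)) : ℝ :=
  populationRisk P ℓ p.1 - empiricalRisk ℓ p.2 p.1

lemma ae_empiricalRisk_mem_Icc [IsProbabilityMeasure P] (hn : n ≠ 0) {θ : Θ}
    (hθ : ∀ᵐ x ∂P, ℓ θ x ∈ Icc a b) :
    ∀ᵐ d ∂(Measure.pi fun _ : Fin n ↦ P), empiricalRisk ℓ d θ ∈ Icc a b := by
  have h : ∀ᵐ d ∂(Measure.pi fun _ : Fin n ↦ P), ∀ i, ℓ θ (d i) ∈ Icc a b :=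
    ae_all_iff.2 fun i ↦ (Measure.quasiMeasurePreserving_eval (fun _ ↦ P) i).ae hθ
  filter_upwards [h] with d hd using empiricalRisk_mem_Icc hn hd

lemma integral_empiricalRisk_pi [IsProbabilityMeasure P] (hn : n ≠ 0) {θ : Θ}
    (hθ : Integrable (ℓ θ) P) :
    ∫ d, empiricalRisk ℓ d θ ∂(Measure.pi fun _ : Fin n ↦ P) = populationRisk P ℓ θ := by
  simp only [empiricalRisk]
  rw [integral_div, integral_finsetSum _ fun i _ ↦ integrable_comp_eval hθ,
    Finset.sum_congr rfl fun i _ ↦ integral_comp_eval (μ := fun _ ↦ P) hθ.aestronglyMeasurable]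
  simp only [Finset.sum_const, Finset.card_univ, Fintype.card_fin, nsmul_eq_mul, populationRisk]
  field_simp

variable [MeasurableSpace Θ]

lemma measurable_populationRisk [SFinite P] (hℓ : Measurable (Function.uncurry ℓ)) :
    Measurable (populationRisk P ℓ) :=
  hℓ.stronglyMeasurable.integral_prod_right'.measurable

lemma measurable_generalizationGap [SFinite P] (hℓ : Measurable (Function.uncurry ℓ)) :
    Measurable (generalizationGap (n := n) P ℓ) := by
  refine ((measurable_populationRisk hℓ).comp measurable_fst).sub (Measurable.div_const ?_ _)
  exact Finset.measurable_sum _ fun i _ ↦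
    hℓ.comp (measurable_fst.prodMk ((measurable_pi_apply i).comp measurable_snd))

lemma populationRisk_mem_Icc [IsProbabilityMeasure P] (hℓ : Measurable (Function.uncurry ℓ))
    {θ : Θ} (hθ : ∀ᵐ x ∂P, ℓ θ x ∈ Icc a b) : populationRisk P ℓ θ ∈ Icc a b :=
  (convex_Icc a b).integral_mem isClosed_Icc hθ
    (.of_mem_Icc a b (hℓ.comp measurable_prodMk_left).aemeasurable hθ)

lemma ae_abs_generalizationGap_le (ρ : Measure Θ) [IsProbabilityMeasure P] (hn : n ≠ 0)
    (hℓ : Measurable (Function.uncurry ℓ)) (hbound : ∀ θ, ∀ᵐ x ∂P, ℓ θ x ∈ Icc a b) :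
    ∀ᵐ p ∂ρ.prod (Measure.pi fun _ : Fin n ↦ P), |generalizationGap P ℓ p| ≤ b - a := by
  rw [Measure.ae_prod_iff_ae_ae
    (measurableSet_le (measurable_generalizationGap hℓ).abs measurable_const)]
  refine ae_of_all _ fun θ ↦ ?_
  filter_upwards [ae_empiricalRisk_mem_Icc hn (hbound θ)] with d hd
  have h := populationRisk_mem_Icc hℓ (hbound θ)
  rw [generalizationGap, abs_le]
  constructor <;> linarith [h.1, h.2, hd.1, hd.2]

lemma hasSubgaussianMGF_generalizationGap (ρ : Measure Θ) [IsProbabilityMeasure ρ]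
    [IsProbabilityMeasure P] (hn : n ≠ 0) (hℓ : Measurable (Function.uncurry ℓ))
    (hbound : ∀ θ, ∀ᵐ x ∂P, ℓ θ x ∈ Icc a b) :
    HasSubgaussianMGF (generalizationGap P ℓ) ((‖b - a‖₊ / 2) ^ 2 / n)
      (ρ.prod (Measure.pi fun _ : Fin n ↦ P)) :=
  hasSubgaussianMGF_prod_of_forall (measurable_generalizationGap hℓ) fun θ ↦
    hasSubgaussianMGF_integral_sub_sampleMean hn (hℓ.comp measurable_prodMk_left).aemeasurable
      (hbound θ)

lemma integral_populationRisk_sub_le_integral_generalizationGap {Ω : Type*} [MeasurableSpace Ω]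
    {μ : Measure Ω} [IsProbabilityMeasure μ] [IsProbabilityMeasure P] (hn : n ≠ 0)
    (hℓ : Measurable (Function.uncurry ℓ)) (hbound : ∀ θ, ∀ᵐ x ∂P, ℓ θ x ∈ Icc a b)
    {D : Ω → Fin n → 𝒳} (hD : Measurable D) (hDlaw : μ.map D = Measure.pi fun _ ↦ P)
    {θhat : Ω → Θ} (hθhat : Measurable θhat) {θ₀ : Θ}
    (hmin : ∀ ω, empiricalRisk ℓ (D ω) (θhat ω) ≤ empiricalRisk ℓ (D ω) θ₀)
    (hgap : Integrable (generalizationGap P ℓ) (μ.map fun ω ↦ (θhat ω, D ω))) :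
    ∫ ω, populationRisk P ℓ (θhat ω) ∂μ - populationRisk P ℓ θ₀ ≤
      ∫ p, generalizationGap P ℓ p ∂(μ.map fun ω ↦ (θhat ω, D ω)) := by
  have hθD : AEMeasurable (fun ω ↦ (θhat ω, D ω)) μ := (hθhat.prodMk hD).aemeasurable
  have hℓθ₀ : Measurable (ℓ θ₀) := hℓ.comp measurable_prodMk_left
  have hR_meas : Measurable fun d : Fin n → 𝒳 ↦ empiricalRisk ℓ d θ₀ :=
    (Finset.measurable_sum _ fun i _ ↦ hℓθ₀.comp (measurable_pi_apply i)).div_const _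
  have hL_int : Integrable (fun ω ↦ populationRisk P ℓ (θhat ω)) μ :=
    .of_mem_Icc a b ((measurable_populationRisk hℓ).comp hθhat).aemeasurable
      (ae_of_all _ fun ω ↦ populationRisk_mem_Icc hℓ (hbound _))
  have hR_int : Integrable (fun ω ↦ empiricalRisk ℓ (D ω) θ₀) μ := by
    refine (integrable_map_measure hR_meas.aestronglyMeasurable hD.aemeasurable).1 ?_
    rw [hDlaw]
    exact .of_mem_Icc a b hR_meas.aemeasurable (ae_empiricalRisk_mem_Icc hn (hbound θ₀))
  have hR : ∫ ω, empiricalRisk ℓ (D ω) θ₀ ∂μ = populationRisk P ℓ θ₀ := by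
    rw [← integral_map hD.aemeasurable hR_meas.aestronglyMeasurable, hDlaw,
      integral_empiricalRisk_pi hn (.of_mem_Icc a b hℓθ₀.aemeasurable (hbound θ₀))]
  have hgap_meas := (measurable_generalizationGap (P := P) (n := n) hℓ).aestronglyMeasurable
    (μ := μ.map fun ω ↦ (θhat ω, D ω))
  rw [integral_map hθD hgap_meas, ← hR, ← integral_sub hL_int hR_int]
  refine integral_mono (hL_int.sub hR_int) ((integrable_map_measure hgap_meas hθD).1 hgap)
    fun ω ↦ ?_
  simp only [generalizationGap]
  linarith [hmin ω]

end Risk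

lemma ENNReal.ofReal_sqrt_div {x y : ℝ} (hx : 0 ≤ x) (hy : 0 < y) :
    ENNReal.ofReal √(x / y) = (ENNReal.ofReal x / ENNReal.ofReal y) ^ (1 / 2 : ℝ) := by
  rw [← ENNReal.ofReal_div_of_pos hy, ENNReal.ofReal_rpow_of_nonneg (by positivity) (by norm_num),
    sqrt_eq_rpow]

theorem bottomUp_excess_risk_le_general
    {Ω 𝒳 Θ : Type*} [MeasurableSpace Ω] [MeasurableSpace 𝒳] [MeasurableSpace Θ]
    (μ : Measure Ω) [IsProbabilityMeasure μ]
    (P : Measure 𝒳) [IsProbabilityMeasure P]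
    (n : ℕ) (hn : 0 < n)
    (ℓ : Θ → 𝒳 → ℝ) (hℓ : Measurable (Function.uncurry ℓ))
    (hbound : ∀ θ : Θ, ∀ᵐ x ∂P, ℓ θ x ∈ Set.Icc (0 : ℝ) 1)
    (D : Ω → Fin n → 𝒳) (hD : Measurable D)
    (hDlaw : μ.map D = Measure.pi fun _ : Fin n => P)
    (θstar : Θ)
    (θhat : Ω → Θ) (hθhat : Measurable θhat)
    (hmin : ∀ ω : Ω, ∀ θ : Θ,
      (∑ i, ℓ (θhat ω) (D ω i)) / n ≤ (∑ i, ℓ θ (D ω i)) / n) :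
    ENNReal.ofReal
        ((∫ ω, ∫ x, ℓ (θhat ω) x ∂P ∂μ) - ∫ x, ℓ θstar x ∂P)
      ≤ (mutualInfo μ θhat D / (2 * n)) ^ (1/2 : ℝ) := by
  have : IsProbabilityMeasure (μ.map θhat) := Measure.isProbabilityMeasure_map hθhat.aemeasurable
  have : IsProbabilityMeasure (μ.map fun ω ↦ (θhat ω, D ω)) :=
    Measure.isProbabilityMeasure_map (hθhat.prodMk hD).aemeasurable
  rw [mutualInfo, hDlaw, klDiv]
  split_ifs with h_fin
  swap
  · rw [ENNReal.top_div_of_ne_top (by finiteness), ENNReal.top_rpow_of_pos (by norm_num)]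
    exact le_top
  obtain ⟨hac, h_llr⟩ := h_fin
  set J := μ.map fun ω ↦ (θhat ω, D ω)
  set I := ∫ p, llr J ((μ.map θhat).prod (Measure.pi fun _ ↦ P)) p ∂J
  have h_gap_int : Integrable (generalizationGap P ℓ) J :=
    .of_bound (measurable_generalizationGap hℓ).aestronglyMeasurable _
      (hac.ae_le (ae_abs_generalizationGap_le _ hn.ne' hℓ hbound))
  have h_gap := hasSubgaussianMGF_generalizationGap (μ.map θhat) hn.ne' hℓ hbound
  rw [show (2 * n : ℝ≥0∞) = ENNReal.ofReal (2 * n) by simp [ENNReal.ofReal_mul],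
    ← ENNReal.ofReal_sqrt_div (integral_llr_nonneg hac h_llr) (by positivity)]
  refine ENNReal.ofReal_le_ofReal ?_
  calc _ ≤ ∫ p, generalizationGap P ℓ p ∂J :=
        integral_populationRisk_sub_le_integral_generalizationGap hn.ne' hℓ hbound hD hDlaw
          hθhat (fun ω ↦ hmin ω θstar) h_gap_int
    _ ≤ √(2 * ((‖(1 : ℝ) - 0‖₊ / 2) ^ 2 / n : ℝ≥0) * I) :=
        h_gap.integral_le_sqrt_mul_integral_llr hac h_llr
    _ = √(I / (2 * n)) := by
      congr 1
      simp only [sub_zero, nnnorm_one, one_div, inv_pow, NNReal.coe_div, NNReal.coe_inv,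
        NNReal.coe_pow, NNReal.coe_ofNat, NNReal.coe_natCast]
      field_simp

/-- **Proposition 1, bottom-up bound.** With population minimizer `θ*` and an
empirical risk minimizer `θ̂_BU` over `Θ`, we have
`E[L_P(θ̂_BU)] − L_P* ≤ √(I(θ̂_BU; D)/(2n))`. -/
theorem bottomUp_excess_risk_le
    {Ω 𝒳 Θ : Type*} [MeasurableSpace Ω] [MeasurableSpace 𝒳] [MeasurableSpace Θ]
    (μ : Measure Ω) [IsProbabilityMeasure μ]
    (P : Measure 𝒳) [IsProbabilityMeasure P]
    (n : ℕ) (hn : 0 < n)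
    (ℓ : Θ → 𝒳 → ℝ) (hℓ : Measurable (Function.uncurry ℓ))
    (hbound : ∀ θ : Θ, ∀ᵐ x ∂P, ℓ θ x ∈ Set.Icc (0 : ℝ) 1)
    (D : Ω → Fin n → 𝒳) (hD : Measurable D)
    (hDlaw : μ.map D = Measure.pi fun _ : Fin n => P)
    (θstar : Θ) (hθstar : ∀ θ : Θ, (∫ x, ℓ θstar x ∂P) ≤ ∫ x, ℓ θ x ∂P)
    (θhat : Ω → Θ) (hθhat : Measurable θhat)
    (hmin : ∀ ω : Ω, ∀ θ : Θ,
      (∑ i, ℓ (θhat ω) (D ω i)) / n ≤ (∑ i, ℓ θ (D ω i)) / n) :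
    ENNReal.ofReal
        ((∫ ω, ∫ x, ℓ (θhat ω) x ∂P ∂μ) - ∫ x, ℓ θstar x ∂P)
      ≤ (mutualInfo μ θhat D / (2 * n)) ^ (1/2 : ℝ) :=
  bottomUp_excess_risk_le_general μ P n hn ℓ hℓ hbound D hD hDlaw θstar θhat hθhat hmin
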